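/- Lipschitz estimate along the gradient flow for the Tataru distance (Lemma 4.2(b)): Under the standing setting (complete geodesic metric space (E,d), proper lower semicontinuous energy 𝓔, an EVI_κ gradient flow S of 𝓔 on E), for all ν, ν̂ ∈ E and all r > 0 one has (d_T(S(r)ν, ν̂) − d_T(ν, ν̂))/r ≤ 1. -/

import Mathlib

open Filter Topology MeasureTheory
open scoped ENNReal

noncomputable section

/-- Upper right Dini derivative (EReal-valued). -/
def diniUR (φ : ℝ → ℝ) (t : ℝ) : EReal :=
  Filter.limsup (fun h : ℝ => (((φ (t + h) - φ t) / h : ℝ) : EReal)) (𝓝[>] (0 : ℝ))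

/-- A geodesic metric space: any two points are joined by a constant speed geodesic. -/
def GeodesicSpace (E : Type*) [MetricSpace E] : Prop :=
  ∀ ρ π : E, ∃ γ : ℝ → E, γ 0 = ρ ∧ γ 1 = π ∧
    ∀ s ∈ Set.Icc (0:ℝ) 1, ∀ t ∈ Set.Icc (0:ℝ) 1,
      dist (γ s) (γ t) = |t - s| * dist ρ π

/-- A continuous curve `γ : [0,∞) → E` with `γ((0,∞)) ⊆ D(𝓔)` solving the
evolution variational inequality EVI_κ. -/
def IsEVISolution {E : Type*} [MetricSpace E] (En : E → EReal) (κ : ℝ) (γ : ℝ → E) : Prop :=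
  ContinuousOn γ (Set.Ici (0:ℝ)) ∧
  (∀ t : ℝ, 0 < t → En (γ t) < ⊤) ∧
  ∀ ρ : E, En ρ < ⊤ → ∀ t : ℝ, 0 ≤ t →
    (1/2 : EReal) * diniUR (fun s => dist (γ s) ρ ^ 2) t ≤
      En ρ - En (γ t) - ((κ / 2 * dist (γ t) ρ ^ 2 : ℝ) : EReal)

/-- An EVI_κ gradient flow of `En` defined on all of `E`. -/
structure IsEVIFlow {E : Type*} [MetricSpace E] (En : E → EReal) (κ : ℝ) (S : ℝ → E → E) : Prop where
  cont : ∀ t : ℝ, 0 ≤ t → Continuous (S t)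
  id0 : ∀ π : E, S 0 π = π
  semigroup : ∀ (π : E) (s t : ℝ), 0 ≤ s → 0 ≤ t → S (t + s) π = S s (S t π)
  evi : ∀ π : E, IsEVISolution En κ (fun t => S t π)

open Classical in
/-- The local slope `|∂𝓔|(ρ)`. -/
def localSlope {E : Type*} [MetricSpace E] (En : E → EReal) (ρ : E) : ℝ≥0∞ :=
  if En ρ = ⊤ then ⊤
  else Filter.limsup (fun π : E => ENNReal.ofReal ((En ρ - En π).toReal / dist ρ π)) (𝓝[≠] ρ)

/-- The information functional `I = |∂𝓔|²`. -/
def info {E : Type*} [MetricSpace E] (En : E → EReal) (π : E) : ℝ≥0∞ := (localSlope En π) ^ 2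

/-- The (modified) Tataru distance `d_T(π,ρ) = inf_{t ≥ 0} { t + e^{κ̂ t} d(π, S(t)ρ) }`,
where `κ̂ = min κ 0`. -/
def tataru {E : Type*} [MetricSpace E] (S : ℝ → E → E) (κ : ℝ) (π ρ : E) : ℝ :=
  sInf {x : ℝ | ∃ t : ℝ, 0 ≤ t ∧ x = t + Real.exp (min κ 0 * t) * dist π (S t ρ)}

end


private lemma dini_aux {f : ℝ → ℝ} {a b : ℝ} (hab : a ≤ b)
    (hf : ContinuousOn f (Set.Icc a b))
    (H : ∀ t ∈ Set.Ico a b, ∀ δ > (0:ℝ), ∃ h, 0 < h ∧ t + h ≤ b ∧ f (t + h) ≤ f t + h * δ) :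
    f b ≤ f a := by
  have key : ∀ δ > (0:ℝ), f b ≤ f a + δ * (b - a) := by
    intro δ hδ
    set A := Set.Icc a b ∩ (fun t => f t - (f a + δ * (t - a))) ⁻¹' Set.Iic 0 with hA
    have haA : a ∈ A := ⟨⟨le_refl a, hab⟩, by simp⟩
    have hne : A.Nonempty := ⟨a, haA⟩
    have hbdd : BddAbove A := ⟨b, fun t ht => ht.1.2⟩
    have hclosed : IsClosed A := by
      apply ContinuousOn.preimage_isClosed_of_isClosed _ isClosed_Icc isClosed_Iic
      exact hf.sub (continuousOn_const.add (continuousOn_const.mul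
        (continuousOn_id.sub continuousOn_const)))
    have hcA : sSup A ∈ A := hclosed.csSup_mem hne hbdd
    set c := sSup A with hc
    have hcb : c ≤ b := hcA.1.2
    have hfc : f c ≤ f a + δ * (c - a) := by
      have := hcA.2
      simp only [Set.mem_preimage, Set.mem_Iic] at this
      linarith
    rcases lt_or_eq_of_le hcb with hlt | heq
    · exfalso
      obtain ⟨h, hh, hhb, hfh⟩ := H c ⟨hcA.1.1, hlt⟩ δ hδ
      have hmem : c + h ∈ A := by
        refine ⟨⟨by linarith [hcA.1.1], hhb⟩, ?_⟩
        simp only [Set.mem_preimage, Set.mem_Iic]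
        nlinarith
      have := le_csSup hbdd hmem
      linarith
    · rw [heq] at hfc; exact hfc
  refine le_of_forall_pos_le_add ?_
  intro ε hε
  rcases eq_or_lt_of_le hab with rfl | hab'
  · linarith [le_refl (f a)]
  · have hba : (0:ℝ) < b - a := by linarith
    have := key (ε / (b - a)) (div_pos hε hba)
    have h2 : ε / (b - a) * (b - a) = ε := div_mul_cancel₀ ε (ne_of_gt hba)
    linarith

private lemma ereal_half : (1/2 : EReal) = ((1/2:ℝ) : EReal) := by
  rw [one_div, one_div, EReal.coe_inv]; congr 1

private lemma half_mul_le {L : EReal} {R : ℝ} (h : (1/2 : EReal) * L ≤ (R : EReal)) :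
    L ≤ ((2*R : ℝ) : EReal) := by
  induction L using EReal.rec with
  | bot => exact bot_le
  | coe x =>
      rw [ereal_half, ← EReal.coe_mul, EReal.coe_le_coe_iff] at h
      exact EReal.coe_le_coe_iff.2 (by linarith)
  | top =>
      exfalso
      rw [EReal.mul_top_of_pos (by rw [ereal_half]; exact EReal.coe_pos.2 (by norm_num))] at h
      exact (EReal.coe_lt_top R).not_ge h

section EVI

variable {E : Type*} [MetricSpace E] {En : E → EReal} {κ : ℝ} {γ : ℝ → E}

/-- statement copy of IsEVISolution to develop against -/
def IsEVISolution' (En : E → EReal) (κ : ℝ) (γ : ℝ → E) : Prop :=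
  ContinuousOn γ (Set.Ici (0:ℝ)) ∧
  (∀ t : ℝ, 0 < t → En (γ t) < ⊤) ∧
  ∀ ρ : E, En ρ < ⊤ → ∀ t : ℝ, 0 ≤ t →
    (1/2 : EReal) * (Filter.limsup (fun h : ℝ =>
      ((((fun s => dist (γ s) ρ ^ 2) (t + h) - (fun s => dist (γ s) ρ ^ 2) t) / h : ℝ) : EReal)) (𝓝[>] (0 : ℝ))) ≤
      En ρ - En (γ t) - ((κ / 2 * dist (γ t) ρ ^ 2 : ℝ) : EReal)

private lemma evi_eventually (hsol : IsEVISolution' En κ γ) (hbot : ∀ π : E, En π ≠ ⊥)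
    {ρ : E} (hρ : En ρ < ⊤) {t : ℝ} (ht : 0 ≤ t) (htfin : En (γ t) < ⊤)
    {K : ℝ} (hK : (En ρ).toReal - (En (γ t)).toReal - κ/2 * dist (γ t) ρ ^2 ≤ K)
    {ε : ℝ} (hε : 0 < ε) :
    ∀ᶠ h in 𝓝[>] (0:ℝ), dist (γ (t+h)) ρ ^ 2 < dist (γ t) ρ ^2 + h * (2*K + ε) := by
  have hEVI := hsol.2.2 ρ hρ t ht
  set R0 : ℝ := (En ρ).toReal - (En (γ t)).toReal - κ/2 * dist (γ t) ρ ^2 with hR0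
  have hrw : En ρ - En (γ t) - ((κ / 2 * dist (γ t) ρ ^ 2 : ℝ) : EReal) = (R0 : EReal) := by
    rw [hR0]
    rw [← EReal.coe_toReal hρ.ne (hbot ρ), ← EReal.coe_toReal htfin.ne (hbot (γ t))]
    rw [← EReal.coe_sub, ← EReal.coe_sub]
    norm_num
  rw [hrw] at hEVI
  have hlim := half_mul_le hEVI
  have hlt : Filter.limsup (fun h : ℝ =>
      (((dist (γ (t + h)) ρ ^ 2 - dist (γ t) ρ ^ 2) / h : ℝ) : EReal)) (𝓝[>] (0 : ℝ))
      < ((2*K + ε : ℝ) : EReal) := by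
    refine lt_of_le_of_lt hlim ?_
    exact EReal.coe_lt_coe_iff.2 (by linarith)
  have hev := Filter.eventually_lt_of_limsup_lt hlt
  have hpos : ∀ᶠ h in 𝓝[>] (0:ℝ), (0:ℝ) < h := eventually_mem_nhdsWithin
  filter_upwards [hev, hpos] with h hq hh
  rw [EReal.coe_lt_coe_iff] at hq
  rw [div_lt_iff₀ hh] at hq
  linarith

end EVI

section EVI2

variable {E : Type*} [MetricSpace E] {En : E → EReal} {κ : ℝ} {γ : ℝ → E}

private lemma evi_segment (hsol : IsEVISolution' En κ γ) (hbot : ∀ π : E, En π ≠ ⊥)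
    {ρ : E} (hρ : En ρ < ⊤) {a b m c : ℝ} (ha : 0 < a) (hab : a ≤ b)
    (hm : ∀ σ ∈ Set.Icc a b, m ≤ (En (γ σ)).toReal)
    (hc : ∀ σ ∈ Set.Icc a b, -(κ/2) * dist (γ σ) ρ ^2 ≤ c) :
    dist (γ b) ρ ^ 2 ≤ dist (γ a) ρ ^2 + (b - a) * (2*((En ρ).toReal - m + c)) := by
  set K : ℝ := (En ρ).toReal - m + c with hK
  have hsub : Set.Icc a b ⊆ Set.Ici (0:ℝ) := fun x hx => le_trans ha.le hx.1
  have hcont : ContinuousOn (fun σ => dist (γ σ) ρ ^ 2 - σ * (2*K)) (Set.Icc a b) := by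
    have h1 : ContinuousOn (fun σ => dist (γ σ) ρ) (Set.Icc a b) :=
      (Continuous.dist continuous_id continuous_const).comp_continuousOn (hsol.1.mono hsub)
    exact ((h1.pow 2)).sub (continuousOn_id.mul continuousOn_const)
  have hD := dini_aux hab hcont ?_
  · nlinarith [hD]
  · intro t htm δ hδ
    have ht0 : 0 < t := lt_of_lt_of_le ha htm.1
    have htIcc : t ∈ Set.Icc a b := ⟨htm.1, htm.2.le⟩
    have hfin : En (γ t) < ⊤ := hsol.2.1 t ht0
    have hKb : (En ρ).toReal - (En (γ t)).toReal - κ/2 * dist (γ t) ρ ^2 ≤ K := by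
      have h1 := hm t htIcc
      have h2 := hc t htIcc
      rw [hK]; nlinarith
    have hev := evi_eventually hsol hbot hρ ht0.le hfin hKb hδ
    have hsmall : ∀ᶠ h in 𝓝[>] (0:ℝ), h < b - t := by
      have : Set.Iio (b - t) ∈ 𝓝 (0:ℝ) := Iio_mem_nhds (by linarith [htm.2])
      exact eventually_nhdsWithin_of_eventually_nhds this
    have hpos : ∀ᶠ h in 𝓝[>] (0:ℝ), (0:ℝ) < h := eventually_mem_nhdsWithin
    obtain ⟨h, hq, hhb, hh⟩ := (hev.and (hsmall.and hpos)).exists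
    exact ⟨h, hh, by linarith, by nlinarith⟩

end EVI2

section EVI3

variable {E : Type*} [MetricSpace E] {En : E → EReal} {κ : ℝ} {γ : ℝ → E}

/-- Lemma C: points right of `t` with energy close to (not much above) energy at `t`. -/
private lemma right_approach (hsol : IsEVISolution' En κ γ) (hbot : ∀ π : E, En π ≠ ⊥)
    {t : ℝ} (ht : 0 < t) {δ δ' : ℝ} (hδ : 0 < δ) (hδ' : 0 < δ') :
    ∃ h, 0 < h ∧ h ≤ δ' ∧ (En (γ (t+h))).toReal ≤ (En (γ t)).toReal + δ := by
  by_contra hcon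
  push_neg at hcon
  -- hcon : ∀ h, 0 < h → h ≤ δ' → (En (γ t)).toReal + δ < (En (γ (t+h))).toReal
  have hct : ContinuousAt γ t := hsol.1.continuousAt (Ici_mem_nhds ht)
  rw [Metric.continuousAt_iff] at hct
  -- choose ε₀ with |κ|/2 * ε₀^2 ≤ δ/4
  set ε₀ : ℝ := min 1 (δ/(2*|κ|+1)) with hε₀
  have hε₀pos : 0 < ε₀ := lt_min one_pos (by positivity)
  have hε₀le : |κ|/2 * ε₀^2 ≤ δ/4 := by
    have h1 : ε₀ ≤ 1 := min_le_left _ _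
    have h2 : ε₀ ≤ δ/(2*|κ|+1) := min_le_right _ _
    have h3 : 0 ≤ |κ| := abs_nonneg κ
    have e1 : ε₀^2 ≤ ε₀ := by nlinarith
    have e2 : |κ| * ε₀ ≤ |κ| * (δ/(2*|κ|+1)) := mul_le_mul_of_nonneg_left h2 h3
    have e3 : |κ| * (δ/(2*|κ|+1)) ≤ δ/2 := by
      rw [mul_div_assoc'] at *
      rw [div_le_div_iff₀ (by positivity) (by norm_num)]
      nlinarith
    nlinarith
  obtain ⟨δ₂, hδ₂pos, hδ₂⟩ := hct ε₀ hε₀pos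
  set δ'' : ℝ := min δ' (δ₂/2) with hδ''
  have hδ''pos : 0 < δ'' := lt_min hδ' (by linarith)
  -- choose h' small with dist (γ (t+h')) (γ t) ^2 < (3*δ/2) * (δ''/2)
  set ε₁ : ℝ := Real.sqrt ((3*δ/2) * (δ''/2)) with hε₁
  have hε₁pos : 0 < ε₁ := Real.sqrt_pos.2 (by positivity)
  obtain ⟨δ₃, hδ₃pos, hδ₃⟩ := hct ε₁ hε₁pos
  set h' : ℝ := min (δ''/2) (δ₃/2) with hh'
  have hh'pos : 0 < h' := lt_min (by linarith) (by linarith)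
  have hh'le : h' ≤ δ''/2 := min_le_left _ _
  -- bound at left endpoint
  have hleft : dist (γ (t+h')) (γ t) ^ 2 < (3*δ/2) * (δ''/2) := by
    have : dist (t+h') t < δ₃ := by
      rw [Real.dist_eq]
      rw [abs_of_nonneg (by linarith : (0:ℝ) ≤ t + h' - t)]
      have : h' ≤ δ₃/2 := min_le_right _ _
      linarith
    have hd := hδ₃ this
    have h0 : 0 ≤ dist (γ (t+h')) (γ t) := dist_nonneg
    calc dist (γ (t+h')) (γ t) ^ 2 ≤ dist (γ (t+h')) (γ t) * ε₁ := by nlinarith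
    _ < ε₁ * ε₁ := by nlinarith
    _ = (3*δ/2) * (δ''/2) := Real.mul_self_sqrt (by positivity)
  -- apply evi_segment on [t+h', t+δ''] with ρ = γ t
  have hfin : En (γ t) < ⊤ := hsol.2.1 t ht
  have hseg := evi_segment hsol hbot hfin (by linarith : (0:ℝ) < t + h')
    (by linarith : t + h' ≤ t + δ'')
    (m := (En (γ t)).toReal + δ) (c := δ/4) ?_ ?_
  · -- contradiction : d² ≥ 0 but bound is negative
    have hval : (t + δ'' - (t + h')) * (2*((En (γ t)).toReal - ((En (γ t)).toReal + δ) + δ/4))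
        = (δ'' - h') * (-(3*δ/2)) := by ring
    rw [hval] at hseg
    have h0 : (0:ℝ) ≤ dist (γ (t+δ'')) (γ t) ^ 2 := sq_nonneg _
    nlinarith
  · -- lower bound on energy
    intro σ hσ
    have hσ1 : 0 < σ - t := by
      rcases hσ with ⟨h1, _⟩; linarith
    have hσ2 : σ - t ≤ δ' := by
      rcases hσ with ⟨_, h2⟩
      have : δ'' ≤ δ' := min_le_left _ _
      linarith
    have := hcon (σ - t) hσ1 hσ2
    have heq : t + (σ - t) = σ := by ring
    rw [heq] at this
    linarith
  · -- bound on -(κ/2) d²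
    intro σ hσ
    have hdist : dist σ t < δ₂ := by
      rw [Real.dist_eq]
      rcases hσ with ⟨h1, h2⟩
      have h3 : δ'' ≤ δ₂/2 := min_le_right _ _
      rw [abs_of_nonneg (by linarith : (0:ℝ) ≤ σ - t)]
      linarith
    have hd := hδ₂ hdist
    have h0 : 0 ≤ dist (γ σ) (γ t) := dist_nonneg
    have : -(κ/2) * dist (γ σ) (γ t) ^2 ≤ |κ|/2 * dist (γ σ) (γ t) ^2 := by
      have := abs_nonneg κ
      nlinarith [neg_abs_le κ, le_abs_self κ, sq_nonneg (dist (γ σ) (γ t))]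
    have hd2 : dist (γ σ) (γ t)^2 ≤ ε₀^2 := by nlinarith
    calc -(κ/2) * dist (γ σ) (γ t) ^2 ≤ |κ|/2 * dist (γ σ) (γ t) ^2 := this
    _ ≤ |κ|/2 * ε₀^2 := mul_le_mul_of_nonneg_left hd2 (by positivity)
    _ ≤ δ/4 := hε₀le

end EVI3

section EVI4

variable {E : Type*} [MetricSpace E] {En : E → EReal} {κ : ℝ}

private lemma lsc_lower (hlsc : LowerSemicontinuous En) {γ : ℝ → E} {t : ℝ}
    (hct : ContinuousAt γ t) (htop : En (γ t) ≠ ⊤) (hb : En (γ t) ≠ ⊥)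
    {ε : ℝ} (hε : 0 < ε) :
    ∃ δ > (0:ℝ), ∀ σ, dist σ t < δ → En (γ σ) < ⊤ → En (γ σ) ≠ ⊥ →
      (En (γ t)).toReal - ε ≤ (En (γ σ)).toReal := by
  obtain ⟨r, hr⟩ : ∃ r : ℝ, En (γ t) = (r : EReal) := ⟨_, (EReal.coe_toReal htop hb).symm⟩
  have hy : (((En (γ t)).toReal - ε : ℝ) : EReal) < En (γ t) := by
    rw [hr, EReal.toReal_coe]
    exact EReal.coe_lt_coe_iff.2 (by linarith)
  have hev : ∀ᶠ σ in 𝓝 t, (((En (γ t)).toReal - ε : ℝ) : EReal) < En (γ σ) :=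
    hct.eventually (hlsc (γ t) _ hy)
  rw [Metric.eventually_nhds_iff] at hev
  obtain ⟨δ, hδpos, hδ⟩ := hev
  refine ⟨δ, hδpos, fun σ hσ hfin hb' => ?_⟩
  have := hδ hσ
  rw [← EReal.coe_toReal hfin.ne hb'] at this
  exact (EReal.coe_lt_coe_iff.1 this).le

end EVI4

section EVI5

variable {E : Type*} [MetricSpace E] {En : E → EReal} {κ : ℝ} {u v : ℝ → E}

set_option maxHeartbeats 1000000 in
private lemma doubling_step (hu : IsEVISolution' En κ u) (hv : IsEVISolution' En κ v)
    (hbot : ∀ π : E, En π ≠ ⊥) (hlsc : LowerSemicontinuous En)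
    {t η δ' : ℝ} (ht : 0 < t) (hη : 0 < η) (hδ' : 0 < δ') :
    ∃ h, 0 < h ∧ h ≤ δ' ∧
      dist (u (t+h)) (v (t+h))^2 ≤
        dist (u t) (v t)^2 + h * (-(2*κ) * dist (u t) (v t)^2 + η) := by
  set d₀ : ℝ := dist (u t) (v t) with hd₀
  have hd₀0 : 0 ≤ d₀ := dist_nonneg
  set ε : ℝ := η/10 with hεdef
  have hε : 0 < ε := by positivity
  have hfu : En (u t) < ⊤ := hu.2.1 t ht
  have hfv : En (v t) < ⊤ := hv.2.1 t ht
  have hctu : ContinuousAt u t := hu.1.continuousAt (Ici_mem_nhds ht)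
  have hctv : ContinuousAt v t := hv.1.continuousAt (Ici_mem_nhds ht)
  -- quantitative continuity constant for the -(κ/2) x² terms
  set ηd : ℝ := min 1 (ε/(|κ| *(2*d₀+2)+1)) with hηd
  have hηdpos : 0 < ηd := lt_min one_pos (by positivity)
  have hkey : ∀ x : ℝ, 0 ≤ x → |x - d₀| ≤ 2*ηd → -(κ/2)*x^2 ≤ -(κ/2)*d₀^2 + ε := by
    intro x hx hxd
    have h1 : ηd ≤ 1 := min_le_left _ _
    have h2 : ηd ≤ ε/(|κ| *(2*d₀+2)+1) := min_le_right _ _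
    have h3 : 0 ≤ |κ| := abs_nonneg κ
    have h4 : |x^2 - d₀^2| ≤ 2*ηd*(2*d₀+2) := by
      have : x ≤ d₀ + 2*ηd := by
        have := abs_le.1 hxd; linarith [this.2]
      have hge : d₀ - 2*ηd ≤ x := by
        have := abs_le.1 hxd; linarith [this.1]
      have : |x^2 - d₀^2| = |x - d₀| * (x + d₀) := by
        rw [show x^2 - d₀^2 = (x - d₀) * (x + d₀) by ring, abs_mul,
          abs_of_nonneg (by linarith : (0:ℝ) ≤ x + d₀)]
      rw [this]
      have hxd0 : x + d₀ ≤ 2*d₀ + 2*ηd := by linarith [abs_le.1 hxd]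
      nlinarith [abs_nonneg (x - d₀)]
    have h5 : |κ| * (2*ηd*(2*d₀+2)) ≤ 2*ε := by
      have e2 : (|κ| *(2*d₀+2)) * ηd ≤ (|κ| *(2*d₀+2)) * (ε/(|κ| *(2*d₀+2)+1)) :=
        mul_le_mul_of_nonneg_left h2 (by positivity)
      have e3 : (|κ| *(2*d₀+2)) * (ε/(|κ| *(2*d₀+2)+1)) ≤ ε := by
        rw [mul_div_assoc']
        rw [div_le_iff₀ (by positivity)]
        nlinarith
      nlinarith
    have h6 : -(κ/2)*x^2 - (-(κ/2)*d₀^2) ≤ |κ|/2 * |x^2 - d₀^2| := by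
      have := le_abs_self (-(κ/2) * (x^2 - d₀^2))
      have habs : |(-(κ/2)) * (x^2 - d₀^2)| = |κ|/2 * |x^2 - d₀^2| := by
        rw [abs_mul, abs_neg, abs_div]
        norm_num
      nlinarith [le_abs_self ((-(κ/2)) * (x^2 - d₀^2))]
    nlinarith
  -- metric continuity radii
  obtain ⟨δ₂, hδ₂pos, hδ₂⟩ := Metric.continuousAt_iff.1 hctu ηd hηdpos
  obtain ⟨δ₃, hδ₃pos, hδ₃⟩ := Metric.continuousAt_iff.1 hctv ηd hηdpos
  -- lsc radii
  obtain ⟨δ₄, hδ₄pos, hδ₄⟩ := lsc_lower hlsc hctu hfu.ne (hbot _) hε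
  obtain ⟨δ₅, hδ₅pos, hδ₅⟩ := lsc_lower hlsc hctv hfv.ne (hbot _) hε
  set δ₀ : ℝ := min δ' (min (δ₂/2) (min (δ₃/2) (min (δ₄/2) (δ₅/2)))) with hδ₀
  have hδ₀pos : 0 < δ₀ := by
    refine lt_min hδ' (lt_min (by linarith) (lt_min (by linarith) (lt_min (by linarith) (by linarith))))
  have hδ₀δ' : δ₀ ≤ δ' := min_le_left _ _
  have hδ₀2 : δ₀ ≤ δ₂/2 := le_trans (min_le_right _ _) (min_le_left _ _)
  have hδ₀3 : δ₀ ≤ δ₃/2 :=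
    le_trans (min_le_right _ _) (le_trans (min_le_right _ _) (min_le_left _ _))
  have hδ₀4 : δ₀ ≤ δ₄/2 :=
    le_trans (min_le_right _ _) (le_trans (min_le_right _ _)
      (le_trans (min_le_right _ _) (min_le_left _ _)))
  have hδ₀5 : δ₀ ≤ δ₅/2 :=
    le_trans (min_le_right _ _) (le_trans (min_le_right _ _)
      (le_trans (min_le_right _ _) (min_le_right _ _)))
  -- pick h via Lemma C
  obtain ⟨h, hhpos, hhle, hℓuh⟩ := right_approach hu hbot ht hε hδ₀pos
  refine ⟨h, hhpos, le_trans hhle hδ₀δ', ?_⟩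
  have hth : 0 < t + h := by linarith
  have hdistσ : ∀ σ ∈ Set.Icc t (t+h), dist σ t ≤ δ₀ := by
    intro σ hσ
    rw [Real.dist_eq, abs_of_nonneg (by linarith [hσ.1] : (0:ℝ) ≤ σ - t)]
    linarith [hσ.2, hhle]
  -- segment estimate (i) for u with ρ = v t
  have seg1 := evi_segment hu hbot hfv ht (by linarith : t ≤ t + h)
    (m := (En (u t)).toReal - ε) (c := -(κ/2)*d₀^2 + ε) ?_ ?_
  -- segment estimate (ii) for v with ρ = u (t+h)
  · have seg2 := evi_segment hv hbot (hu.2.1 (t+h) hth) ht (by linarith : t ≤ t + h)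
      (m := (En (v t)).toReal - ε) (c := -(κ/2)*d₀^2 + ε) ?_ ?_
    · -- combine
      rw [show t + h - t = h by ring] at seg1 seg2
      have hcomm1 : dist (v t) (u (t+h)) = dist (u (t+h)) (v t) := dist_comm _ _
      have hcomm2 : dist (v (t+h)) (u (t+h)) = dist (u (t+h)) (v (t+h)) := dist_comm _ _
      rw [hcomm1, hcomm2] at seg2
      have hmono : h * (2*((En (u (t+h))).toReal - ((En (v t)).toReal - ε) + (-(κ/2)*d₀^2 + ε))) ≤
          h * (2*(((En (u t)).toReal + ε) - ((En (v t)).toReal - ε) + (-(κ/2)*d₀^2 + ε))) := by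
        apply mul_le_mul_of_nonneg_left _ hhpos.le
        linarith
      have hεh : h * ε = h * (η/10) := by rw [hεdef]
      linarith [seg1, seg2, hmono, hεh]
    · -- m bound for v
      intro σ hσ
      have hσ0 : 0 < σ := lt_of_lt_of_le ht hσ.1
      exact hδ₅ σ (lt_of_le_of_lt (hdistσ σ hσ) (by linarith)) (hv.2.1 σ hσ0) (hbot _)
    · -- c bound for v : dist (v σ) (u (t+h))
      intro σ hσ
      refine hkey _ dist_nonneg ?_
      have e1 : |dist (v σ) (u (t+h)) - dist (v t) (u (t+h))| ≤ dist (v σ) (v t) := by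
        exact abs_dist_sub_le _ _ _
      have e2 : |dist (v t) (u (t+h)) - dist (v t) (u t)| ≤ dist (u (t+h)) (u t) := by
        rw [dist_comm (v t) (u (t+h)), dist_comm (v t) (u t)]
        exact abs_dist_sub_le _ _ _
      have e3 : dist (v σ) (v t) < ηd :=
        hδ₃ (lt_of_le_of_lt (hdistσ σ hσ) (by linarith))
      have e4 : dist (u (t+h)) (u t) < ηd := by
        refine hδ₂ ?_
        have : t + h ∈ Set.Icc t (t+h) := ⟨by linarith, le_refl _⟩
        exact lt_of_le_of_lt (hdistσ _ this) (by linarith)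
      have e5 : dist (v t) (u t) = d₀ := dist_comm (v t) (u t)
      have := abs_sub_abs_le_abs_sub (dist (v σ) (u (t+h))) d₀
      calc |dist (v σ) (u (t+h)) - d₀| ≤
          |dist (v σ) (u (t+h)) - dist (v t) (u (t+h))| + |dist (v t) (u (t+h)) - d₀| :=
            abs_sub_le _ _ _
        _ ≤ dist (v σ) (v t) + dist (u (t+h)) (u t) := by
            rw [← e5]; exact add_le_add e1 e2
        _ ≤ 2*ηd := by linarith
  · -- m bound for u
    intro σ hσ
    have hσ0 : 0 < σ := lt_of_lt_of_le ht hσ.1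
    exact hδ₄ σ (lt_of_le_of_lt (hdistσ σ hσ) (by linarith)) (hu.2.1 σ hσ0) (hbot _)
  · -- c bound for u : dist (u σ) (v t)
    intro σ hσ
    refine hkey _ dist_nonneg ?_
    have e1 : |dist (u σ) (v t) - dist (u t) (v t)| ≤ dist (u σ) (u t) := abs_dist_sub_le _ _ _
    have e3 : dist (u σ) (u t) < ηd :=
      hδ₂ (lt_of_le_of_lt (hdistσ σ hσ) (by linarith))
    calc |dist (u σ) (v t) - d₀| ≤ dist (u σ) (u t) := e1
      _ ≤ 2*ηd := by linarith

end EVI5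

section EVI6

variable {E : Type*} [MetricSpace E] {En : E → EReal} {κ : ℝ} {u v : ℝ → E}

set_option maxHeartbeats 1000000 in
private lemma contraction_curves (hu : IsEVISolution' En κ u) (hv : IsEVISolution' En κ v)
    (hbot : ∀ π : E, En π ≠ ⊥) (hlsc : LowerSemicontinuous En)
    {t : ℝ} (ht : 0 ≤ t) :
    dist (u t) (v t) ≤ Real.exp (-κ * t) * dist (u 0) (v 0) := by
  rcases eq_or_lt_of_le ht with rfl | htpos
  · simp
  set f : ℝ → ℝ := fun s => Real.exp (2*κ*s) * dist (u s) (v s)^2 with hf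
  have hcont : ContinuousOn f (Set.Ici (0:ℝ)) := by
    apply ContinuousOn.mul
    · exact (Real.continuous_exp.comp (continuous_const.mul continuous_id)).continuousOn
    · have h1 : ContinuousOn (fun s => dist (u s) (v s)) (Set.Ici (0:ℝ)) := by
        exact continuous_dist.comp_continuousOn (hu.1.prodMk hv.1)
      exact h1.pow 2
  have key : ∀ a, 0 < a → a ≤ t → f t ≤ f a := by
    intro a ha hat
    refine dini_aux hat (hcont.mono (fun x hx => le_trans ha.le hx.1)) ?_
    intro s hs δ hδ
    have hspos : 0 < s := lt_of_lt_of_le ha hs.1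
    set η : ℝ := δ * Real.exp (-(2*κ*s)) * Real.exp (-(2*|κ|)) with hηdef
    have hηpos : 0 < η := by positivity
    obtain ⟨h, hhpos, hhle, hbound⟩ := doubling_step hu hv hbot hlsc hspos hηpos
      (lt_min (by linarith [hs.2] : (0:ℝ) < t - s) one_pos)
    have hh1 : h ≤ 1 := le_trans hhle (min_le_right _ _)
    have hhts : h ≤ t - s := le_trans hhle (min_le_left _ _)
    refine ⟨h, hhpos, by linarith, ?_⟩
    set ws : ℝ := dist (u s) (v s)^2 with hws
    have hws0 : 0 ≤ ws := sq_nonneg _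
    set A : ℝ := Real.exp (2*κ*s) with hA
    have hApos : 0 < A := Real.exp_pos _
    set B : ℝ := Real.exp (2*κ*h) with hB
    have hBpos : 0 < B := Real.exp_pos _
    have e1 : Real.exp (2*κ*(s+h)) = A * B := by
      rw [hA, hB, ← Real.exp_add]; ring_nf
    have e2 : B * (1 - 2*κ*h) ≤ 1 := by
      have h1 := Real.add_one_le_exp (-(2*κ*h))
      have h2 : B * Real.exp (-(2*κ*h)) = 1 := by
        rw [hB, ← Real.exp_add]; simp
      nlinarith
    have e3 : B ≤ Real.exp (2*|κ|) := by
      rw [hB]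
      apply Real.exp_le_exp.2
      nlinarith [le_abs_self κ, neg_abs_le κ, abs_nonneg κ]
    have e4 : A * Real.exp (2*|κ|) * η = δ := by
      rw [hηdef, hA, Real.exp_neg, Real.exp_neg]
      field_simp
    have hmain : dist (u (s+h)) (v (s+h))^2 ≤ ws + h * (-(2*κ) * ws + η) := hbound
    have hstep : f (s+h) ≤ A * B * (ws + h * (-(2*κ) * ws + η)) := by
      rw [hf]
      simp only
      rw [e1]
      apply mul_le_mul_of_nonneg_left hmain (by positivity)
    have hfinal : A * B * (ws + h * (-(2*κ) * ws + η)) ≤ A * ws + h * δ := by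
      have t1 : A * B * (ws + h * (-(2*κ) * ws + η)) =
          A * (B * (1 - 2*κ*h)) * ws + A * B * h * η := by ring
      have t2 : A * (B * (1 - 2*κ*h)) * ws ≤ A * ws := by
        have := mul_le_mul_of_nonneg_right e2 hws0
        nlinarith
      have t3 : A * B * h * η ≤ A * Real.exp (2*|κ|) * h * η := by
        have := mul_le_mul_of_nonneg_right e3 (le_of_lt hhpos)
        nlinarith [hηpos.le]
      have t4 : A * Real.exp (2*|κ|) * h * η = h * δ := by
        rw [← e4]; ring
      linarith
    calc f (s+h) ≤ A * B * (ws + h * (-(2*κ) * ws + η)) := hstep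
      _ ≤ A * ws + h * δ := hfinal
      _ = f s + h * δ := by rw [hf]
  -- limit a → 0⁺
  have htend : Filter.Tendsto f (nhdsWithin 0 (Set.Ioi (0:ℝ))) (nhds (f 0)) := by
    have := (hcont 0 (Set.self_mem_Ici)).tendsto
    exact Filter.Tendsto.mono_left this
      (nhdsWithin_mono 0 (fun x hx => Set.mem_Ici.2 (le_of_lt hx)))
  have hev : ∀ᶠ a in nhdsWithin 0 (Set.Ioi (0:ℝ)), f t ≤ f a := by
    have h1 : ∀ᶠ a in nhdsWithin 0 (Set.Ioi (0:ℝ)), (0:ℝ) < a := eventually_mem_nhdsWithin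
    have h2 : ∀ᶠ a in nhdsWithin 0 (Set.Ioi (0:ℝ)), a < t :=
      eventually_nhdsWithin_of_eventually_nhds (Iio_mem_nhds htpos)
    filter_upwards [h1, h2] with a ha hat
    exact key a ha hat.le
  have hle : f t ≤ f 0 := ge_of_tendsto htend hev
  -- conclude
  have hf0 : f 0 = dist (u 0) (v 0)^2 := by rw [hf]; simp
  have hft : f t = Real.exp (2*κ*t) * dist (u t) (v t)^2 := rfl
  rw [hf0, hft] at hle
  have hsq : dist (u t) (v t)^2 ≤ (Real.exp (-κ*t) * dist (u 0) (v 0))^2 := by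
    have hexp : (Real.exp (-κ*t) * dist (u 0) (v 0))^2
        = Real.exp (-(2*κ*t)) * dist (u 0) (v 0)^2 := by
      rw [mul_pow]
      congr 1
      rw [pow_two, ← Real.exp_add]
      congr 1
      ring
    have h2 := mul_le_mul_of_nonneg_left hle (Real.exp_pos (-(2*κ*t))).le
    have h3 : Real.exp (-(2*κ*t)) * (Real.exp (2*κ*t) * dist (u t) (v t)^2)
        = dist (u t) (v t)^2 := by
      rw [← mul_assoc, ← Real.exp_add]
      norm_num
    rw [hexp]
    rw [h3] at h2
    exact h2
  refine (pow_le_pow_iff_left₀ dist_nonneg (by positivity) (by norm_num)).1 hsq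

end EVI6

set_option maxHeartbeats 1000000 in
/-- Lipschitz estimate along the gradient flow for the Tataru distance (Lemma 4.2(b)). -/
theorem tataru_lipschitz_along_flow
    {E : Type*} [MetricSpace E] [CompleteSpace E]
    (hgeo : GeodesicSpace E)
    (En : E → EReal) (hbot : ∀ π : E, En π ≠ ⊥) (hproper : ∃ π : E, En π < ⊤)
    (hlsc : LowerSemicontinuous En)
    (κ : ℝ) (S : ℝ → E → E) (hflow : IsEVIFlow En κ S)
    (ν ν' : E) (r : ℝ) (hr : 0 < r) :
    (tataru S κ (S r ν) ν' - tataru S κ ν ν') / r ≤ 1 := by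
  rw [div_le_one hr]
  have hcontr : ∀ (a b : E) (s : ℝ), 0 ≤ s →
      dist (S s a) (S s b) ≤ Real.exp (-κ * s) * dist a b := by
    intro a b s hs
    have hu : IsEVISolution' En κ (fun t => S t a) := hflow.evi a
    have hv : IsEVISolution' En κ (fun t => S t b) := hflow.evi b
    have := contraction_curves hu hv hbot hlsc hs
    simpa [hflow.id0] using this
  unfold tataru
  set A := {x : ℝ | ∃ t : ℝ, 0 ≤ t ∧ x = t + Real.exp (min κ 0 * t) * dist ν (S t ν')} with hA
  set B := {x : ℝ | ∃ t : ℝ, 0 ≤ t ∧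
    x = t + Real.exp (min κ 0 * t) * dist (S r ν) (S t ν')} with hB
  have hAne : A.Nonempty :=
    ⟨0 + Real.exp (min κ 0 * 0) * dist ν (S 0 ν'), 0, le_refl 0, rfl⟩
  have hBbdd : BddBelow B := by
    refine ⟨0, ?_⟩
    rintro x ⟨t, ht, hx⟩
    rw [hx]
    positivity
  have key : ∀ x ∈ A, sInf B ≤ x + r := by
    rintro x ⟨t, ht, hx⟩
    have hmem : (t + r) + Real.exp (min κ 0 * (t+r)) * dist (S r ν) (S (t+r) ν') ∈ B :=
      ⟨t + r, by linarith, rfl⟩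
    have h1 := csInf_le hBbdd hmem
    have hsg : S (t + r) ν' = S r (S t ν') := hflow.semigroup ν' r t hr.le ht
    have hd : dist (S r ν) (S (t+r) ν') ≤ Real.exp (-κ*r) * dist ν (S t ν') := by
      rw [hsg]
      exact hcontr ν (S t ν') r hr.le
    have hexp : Real.exp (min κ 0 * (t+r)) * Real.exp (-κ*r) ≤ Real.exp (min κ 0 * t) := by
      rw [← Real.exp_add]
      apply Real.exp_le_exp.2
      have hm : min κ 0 ≤ κ := min_le_left κ 0
      nlinarith [hr.le]
    calc sInf B ≤ (t+r) + Real.exp (min κ 0 * (t+r)) * dist (S r ν) (S (t+r) ν') := h1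
      _ ≤ (t+r) + Real.exp (min κ 0 * (t+r)) * (Real.exp (-κ*r) * dist ν (S t ν')) := by
          have := mul_le_mul_of_nonneg_left hd (Real.exp_pos (min κ 0 * (t+r))).le
          linarith
      _ ≤ (t+r) + Real.exp (min κ 0 * t) * dist ν (S t ν') := by
          have h2 : Real.exp (min κ 0 * (t+r)) * Real.exp (-κ*r) * dist ν (S t ν')
              ≤ Real.exp (min κ 0 * t) * dist ν (S t ν') :=
            mul_le_mul_of_nonneg_right hexp dist_nonneg
          nlinarith [dist_nonneg (x := ν) (y := S t ν')]
      _ = x + r := by rw [hx]; ring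
  have hfin : sInf B - r ≤ sInf A :=
    le_csInf hAne (fun x hx => by linarith [key x hx])
  linarith
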